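/- Let n, r ≥ 1 and m ≥ 0 be integers. Then (1/(r!·n^r)) · Σ_{σ ∈ W(n,r)} (|Fix(σ)|/n)^m = Σ_{i=0}^{min(m,r)} S(m,i) · n^{−i}. In particular, if m ≤ r, this quantity equals the m-th moment of the Poisson distribution of mean 1/n, i.e. it equals Σ_{j=0}^{∞} j^m · e^{−1/n} · (1/n)^j / j!. -/

import Mathlib

/-- Stirling numbers of the second kind. -/
def stirling2 : ℕ → ℕ → ℕ
  | 0, 0 => 1
  | 0, _ + 1 => 0
  | _ + 1, 0 => 0
  | m + 1, i + 1 => (i + 1) * stirling2 m (i + 1) + stirling2 m i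

/-- The action of an element of the wreath product `C_n ≀ S_r` on `B(n,r)`. -/
def wAct (n r : ℕ) (σ : (Fin r → ZMod n) × Equiv.Perm (Fin r)) :
    ZMod n × Fin r → ZMod n × Fin r :=
  fun p => (σ.1 p.2 + p.1, σ.2 p.2)

/-- The number of fixed points of `σ ∈ C_n ≀ S_r` acting on `B(n,r)`. -/
noncomputable def fixCount (n r : ℕ) (σ : (Fin r → ZMod n) × Equiv.Perm (Fin r)) : ℕ :=
  Nat.card {p : ZMod n × Fin r // wAct n r σ p = p}

/-!
Write `σ = (ζ, π)`. A point `(z, i)` is fixed by `σ` iff `π i = i` and `ζ i = 0`, so `|Fix σ| / n`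
is the number `k` of such fixed slots `i`. Expanding `k ^ m = ∑ S(m, i) k^(i)` into falling
factorials, the sum of `k^(i)` over `σ` counts pairs of `σ` and an injective `i`-tuple of its fixed
slots; each tuple is compatible with `(r - i)! n^(r - i)` elements `σ`, so the average of `k^(i)`
is `n^(-i)` for `i ≤ r` and `0` beyond. The Poisson distribution of mean `λ` has factorial moments
`λ^i`, hence `m`-th moment `∑ S(m, i) λ^i`, which is the same sum when `m ≤ r`.
-/

open Finset Fintype

theorem stirling2_eq_stirlingSecond : ∀ m i, stirling2 m i = Nat.stirlingSecond m i
  | 0, 0 | 0, _ + 1 | _ + 1, 0 => rfl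
  | m + 1, i + 1 => by
    rw [stirling2, Nat.stirlingSecond_succ_succ, stirling2_eq_stirlingSecond m (i + 1),
      stirling2_eq_stirlingSecond m i]

namespace Nat

theorem mul_descFactorial_eq_descFactorial_succ_add (k i : ℕ) :
    k * k.descFactorial i = k.descFactorial (i + 1) + i * k.descFactorial i := by
  rcases le_or_gt i k with h | h
  · rw [descFactorial_succ, ← Nat.add_mul, Nat.sub_add_cancel h]
  · simp [descFactorial_eq_zero_iff_lt.2 h]

theorem pow_eq_sum_stirlingSecond_mul_descFactorial (k m : ℕ) :
    k ^ m = ∑ i ∈ range (m + 1), stirlingSecond m i * k.descFactorial i := by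
  induction m with
  | zero => simp
  | succ m ih =>
    have shift : ∑ i ∈ range (m + 1), (i + 1) * stirlingSecond m (i + 1) * k.descFactorial (i + 1)
        = ∑ i ∈ range (m + 1), stirlingSecond m i * (i * k.descFactorial i) := by
      rw [sum_range_succ, stirlingSecond_eq_zero_of_lt (lt_add_one m), sum_range_succ']
      simp only [mul_zero, zero_mul, add_zero]
      exact sum_congr rfl fun i _ => by ring
    rw [sum_range_succ', stirlingSecond_succ_zero, zero_mul, add_zero]
    simp only [stirlingSecond_succ_succ, add_mul _ _ (k.descFactorial _), sum_add_distrib, shift]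
    rw [pow_succ, mul_comm, ih, mul_sum, ← sum_add_distrib]
    refine sum_congr rfl fun i _ => ?_
    rw [mul_left_comm, mul_descFactorial_eq_descFactorial_succ_add]
    ring

end Nat

theorem Fintype.sum_card_embedding_eq_sum_card {ι β α : Type*} [Fintype ι] [Fintype β]
    [DecidableEq β] [Fintype α] [DecidableEq α] (S : ι → Finset α) :
    ∑ i, card (β ↪ S i) = ∑ g : β ↪ α, card {i // univ.map g ⊆ S i} := by
  let e : (Σ i, β ↪ S i) ≃ Σ g : β ↪ α, {i // univ.map g ⊆ S i} :=
    { toFun x := ⟨x.2.trans (Function.Embedding.subtype _), x.1, fun a ha => by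
        obtain ⟨b, -, rfl⟩ := mem_map.1 ha
        exact (x.2 b).2⟩
      invFun y := ⟨y.2.1, fun b => ⟨y.1 b, y.2.2 (mem_map_of_mem _ (mem_univ b))⟩,
        fun b b' h => y.1.injective congr($h.1)⟩
      left_inv _ := rfl
      right_inv _ := rfl }
  rw [← card_sigma, ← card_sigma, card_congr e]

section WreathProduct

variable {α M : Type*} [Fintype α] [DecidableEq α] [DecidableEq M] [Zero M]

theorem card_subtype_perm_forall_mem_eq_self (s : Finset α) :
    card {π : Equiv.Perm α // ∀ a ∈ s, π a = a} = (card α - #s).factorial := by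
  rw [← card_congr ((Equiv.Perm.subtypeEquivSubtypePerm (· ∉ s)).trans
    (Equiv.subtypeEquivRight fun π => by simp only [not_not])), card_perm, card_subtype_compl,
    card_coe]

def fixedSlots (σ : (α → M) × Equiv.Perm α) : Finset α := {i | σ.2 i = i ∧ σ.1 i = 0}

theorem mem_fixedSlots {σ : (α → M) × Equiv.Perm α} {i : α} :
    i ∈ fixedSlots σ ↔ σ.2 i = i ∧ σ.1 i = 0 := by
  simp [fixedSlots]

variable [Fintype M]

theorem card_subtype_forall_mem_eq_zero (s : Finset α) :
    card {f : α → M // ∀ a ∈ s, f a = 0} = card M ^ (card α - #s) := by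
  rw [card_congr (Equiv.subtypePiEquivPi (p := fun a (z : M) => a ∈ s → z = 0)), Fintype.card_pi]
  have factor (a : α) : card {z : M // a ∈ s → z = 0} = if a ∈ s then 1 else card M := by
    split_ifs with h <;> simp [h]
  simp [factor, prod_ite, filter_not, card_sdiff]

theorem card_subtype_subset_fixedSlots (s : Finset α) :
    card {σ : (α → M) × Equiv.Perm α // s ⊆ fixedSlots σ} =
      card M ^ (card α - #s) * (card α - #s).factorial := by
  rw [card_congr ((Equiv.subtypeEquivRight fun σ => ?_).trans
    (Equiv.subtypeProdEquivProd (p := fun f : α → M => ∀ a ∈ s, f a = 0)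
      (q := fun π : Equiv.Perm α => ∀ a ∈ s, π a = a))),
    card_prod, card_subtype_forall_mem_eq_zero, card_subtype_perm_forall_mem_eq_self]
  simp only [subset_iff, mem_fixedSlots, ← forall_and, and_comm]

theorem sum_descFactorial_card_fixedSlots (t : ℕ) :
    ∑ σ : (α → M) × Equiv.Perm α, (#(fixedSlots σ)).descFactorial t =
      (card α).descFactorial t * (card M ^ (card α - t) * (card α - t).factorial) := by
  calc ∑ σ : (α → M) × Equiv.Perm α, (#(fixedSlots σ)).descFactorial t
      = ∑ σ : (α → M) × Equiv.Perm α, card (Fin t ↪ fixedSlots σ) := by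
        simp only [card_embedding_eq, Fintype.card_fin, card_coe]
    _ = ∑ g : Fin t ↪ α, card M ^ (card α - t) * (card α - t).factorial := by
      simp only [sum_card_embedding_eq_sum_card, card_subtype_subset_fixedSlots, card_map,
        Finset.card_fin]
    _ = _ := by rw [sum_const, card_univ, card_embedding_eq, Fintype.card_fin, smul_eq_mul]

theorem sum_card_fixedSlots_pow (m : ℕ) :
    ∑ σ : (α → M) × Equiv.Perm α, #(fixedSlots σ) ^ m =
      ∑ i ∈ range (min m (card α) + 1),
        Nat.stirlingSecond m i * ((card α).factorial * card M ^ (card α - i)) := by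
  calc ∑ σ : (α → M) × Equiv.Perm α, #(fixedSlots σ) ^ m
      = ∑ i ∈ range (m + 1), Nat.stirlingSecond m i *
          ((card α).descFactorial i * (card M ^ (card α - i) * (card α - i).factorial)) := by
        simp_rw [Nat.pow_eq_sum_stirlingSecond_mul_descFactorial _ m]
        rw [sum_comm]
        simp_rw [← mul_sum, sum_descFactorial_card_fixedSlots]
    _ = ∑ i ∈ range (min m (card α) + 1), Nat.stirlingSecond m i *
          ((card α).descFactorial i * (card M ^ (card α - i) * (card α - i).factorial)) := by
        refine (sum_subset (range_subset_range.2 (by omega)) fun i hm hr => ?_).symm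
        rw [Nat.descFactorial_of_lt (by simp at hm hr; omega), zero_mul, mul_zero]
    _ = _ := sum_congr rfl fun i hi => by
        rw [← Nat.factorial_mul_descFactorial (by simp at hi; omega : i ≤ card α)]
        ring

theorem average_card_fixedSlots_pow (m : ℕ) :
    (card ((α → M) × Equiv.Perm α) : ℝ)⁻¹ *
        ∑ σ : (α → M) × Equiv.Perm α, (#(fixedSlots σ) : ℝ) ^ m =
      ∑ i ∈ range (min m (card α) + 1), (Nat.stirlingSecond m i : ℝ) * ((card M : ℝ)⁻¹) ^ i := by
  have hM : (card M : ℝ) ≠ 0 := Nat.cast_ne_zero.2 card_ne_zero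
  have hsum := congr(($(sum_card_fixedSlots_pow (α := α) (M := M) m) : ℝ))
  push_cast at hsum
  rw [hsum, mul_sum, card_prod, card_fun, card_perm]
  refine sum_congr rfl fun i hi => ?_
  have hir : i ≤ card α := by simp at hi; omega
  rw [pow_sub₀ _ hM hir, inv_pow]
  push_cast
  field_simp

end WreathProduct

theorem hasSum_descFactorial_mul_pow_div_factorial (x : ℝ) (i : ℕ) :
    HasSum (fun j : ℕ => (j.descFactorial i : ℝ) * x ^ j / j.factorial) (x ^ i * Real.exp x) := by
  rw [← hasSum_nat_add_iff' i, Finset.sum_eq_zero fun j hj => by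
    rw [Nat.descFactorial_of_lt (mem_range.1 hj), Nat.cast_zero, zero_mul, zero_div], sub_zero]
  have hexp : HasSum (fun k : ℕ => x ^ k / k.factorial) (Real.exp x) := by
    rw [Real.exp_eq_exp_ℝ]
    exact NormedSpace.expSeries_div_hasSum_exp x
  refine (hexp.mul_left (x ^ i)).congr_fun fun k => ?_
  have h := Nat.factorial_mul_descFactorial (Nat.le_add_left i k)
  rw [Nat.add_sub_cancel] at h
  rw [← h, pow_add]
  push_cast
  field_simp

theorem hasSum_pow_mul_poisson (x : ℝ) (m : ℕ) :
    HasSum (fun j : ℕ => (j : ℝ) ^ m * (Real.exp (-x) * x ^ j / j.factorial))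
      (∑ i ∈ range (m + 1), (Nat.stirlingSecond m i : ℝ) * x ^ i) := by
  have h := (hasSum_sum (s := range (m + 1)) fun i _ =>
    (hasSum_descFactorial_mul_pow_div_factorial x i).mul_left (Nat.stirlingSecond m i : ℝ)).mul_left
      (Real.exp (-x))
  have hval :
      Real.exp (-x) * ∑ i ∈ range (m + 1), (Nat.stirlingSecond m i : ℝ) * (x ^ i * Real.exp x)
        = ∑ i ∈ range (m + 1), (Nat.stirlingSecond m i : ℝ) * x ^ i := by
    rw [mul_sum]
    refine sum_congr rfl fun i _ => ?_
    rw [Real.exp_neg]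
    field_simp
  refine hval ▸ h.congr_fun fun j => ?_
  rw [← Nat.cast_pow, Nat.pow_eq_sum_stirlingSecond_mul_descFactorial j m]
  push_cast
  rw [sum_mul, mul_sum]
  exact sum_congr rfl fun i _ => by ring

theorem wAct_eq_self_iff {n r : ℕ} {σ : (Fin r → ZMod n) × Equiv.Perm (Fin r)}
    {p : ZMod n × Fin r} : wAct n r σ p = p ↔ p.2 ∈ fixedSlots σ := by
  simp [wAct, Prod.ext_iff, mem_fixedSlots, and_comm]

theorem fixCount_eq_mul_card_fixedSlots (n r : ℕ)
    (σ : (Fin r → ZMod n) × Equiv.Perm (Fin r)) : fixCount n r σ = n * #(fixedSlots σ) := by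
  let e : {p // wAct n r σ p = p} ≃ ZMod n × fixedSlots σ :=
    { toFun p := (p.1.1, ⟨p.1.2, wAct_eq_self_iff.1 p.2⟩)
      invFun q := ⟨(q.1, q.2), wAct_eq_self_iff.2 q.2.2⟩
      left_inv _ := rfl
      right_inv _ := rfl }
  rw [fixCount, Nat.card_congr e, Nat.card_prod, Nat.card_zmod, Nat.card_eq_fintype_card, card_coe]

theorem stmt2_general (n r : ℕ) [NeZero n] (m : ℕ) :
    ((1 / ((r.factorial * n ^ r : ℕ) : ℝ)) *
      ∑ σ : (Fin r → ZMod n) × Equiv.Perm (Fin r), ((fixCount n r σ : ℝ) / (n : ℝ)) ^ m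
      = ∑ i ∈ Finset.range (min m r + 1), (stirling2 m i : ℝ) * ((n : ℝ)⁻¹) ^ i) ∧
    (m ≤ r →
      (1 / ((r.factorial * n ^ r : ℕ) : ℝ)) *
        ∑ σ : (Fin r → ZMod n) × Equiv.Perm (Fin r), ((fixCount n r σ : ℝ) / (n : ℝ)) ^ m
        = ∑' j : ℕ, (j : ℝ) ^ m * (Real.exp (-(1 / (n : ℝ))) * (1 / (n : ℝ)) ^ j / (j.factorial : ℝ))) := by
  have hfix (σ : (Fin r → ZMod n) × Equiv.Perm (Fin r)) :
      (fixCount n r σ : ℝ) / n = #(fixedSlots σ) := by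
    rw [fixCount_eq_mul_card_fixedSlots, Nat.cast_mul,
      mul_div_cancel_left₀ _ (Nat.cast_ne_zero.2 (NeZero.ne n))]
  have hcard : ((r.factorial * n ^ r : ℕ) : ℝ) = card ((Fin r → ZMod n) × Equiv.Perm (Fin r)) := by
    simp [card_prod, card_perm, ZMod.card, mul_comm]
  have hmoment := average_card_fixedSlots_pow (α := Fin r) (M := ZMod n) m
  simp only [Fintype.card_fin, ZMod.card, ← stirling2_eq_stirlingSecond, ← hcard, ← hfix] at hmoment
  rw [one_div, hmoment]
  refine ⟨rfl, fun hm => ?_⟩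
  rw [min_eq_left hm, (hasSum_pow_mul_poisson _ m).tsum_eq]
  simp only [stirling2_eq_stirlingSecond, one_div]

theorem stmt2 (n r : ℕ) [NeZero n] (hr : 1 ≤ r) (m : ℕ) :
    ((1 / ((r.factorial * n ^ r : ℕ) : ℝ)) *
      ∑ σ : (Fin r → ZMod n) × Equiv.Perm (Fin r), ((fixCount n r σ : ℝ) / (n : ℝ)) ^ m
      = ∑ i ∈ Finset.range (min m r + 1), (stirling2 m i : ℝ) * ((n : ℝ)⁻¹) ^ i) ∧
    (m ≤ r →
      (1 / ((r.factorial * n ^ r : ℕ) : ℝ)) *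
        ∑ σ : (Fin r → ZMod n) × Equiv.Perm (Fin r), ((fixCount n r σ : ℝ) / (n : ℝ)) ^ m
        = ∑' j : ℕ, (j : ℝ) ^ m * (Real.exp (-(1 / (n : ℝ))) * (1 / (n : ℝ)) ^ j / (j.factorial : ℝ))) :=
  stmt2_general n r m
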